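/- For the continuous Gaussian kernel g_t(s) = (4πt)^{-1/2} e^{-s²/(4t)} and the discrete heat kernel G(t,n) = e^{-2t} I_n(2t), for each k≥0 the ratio (∑_{n∈ℤ} n^{2k} G(t,n)) / (∫_ℝ s^{2k} g_t(s) ds) tends to 1 as t→+∞. -/

import Mathlib

open MeasureTheory Filter Real

noncomputable def heatKernel (t : ℝ) (n : ℤ) : ℝ :=
  Real.exp (-2 * t) *
    ∑' m : ℕ, t ^ (2 * m + n.natAbs) /
      ((m.factorial : ℝ) * Real.Gamma ((m : ℝ) + (n.natAbs : ℝ) + 1))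

/-- The continuous Gaussian kernel `g_t(s) = (4πt)^{-1/2} e^{-s²/(4t)}`. -/
noncomputable def gaussKernel (t s : ℝ) : ℝ :=
  (1 / Real.sqrt (4 * π * t)) * Real.exp (-s ^ 2 / (4 * t))

namespace Stmt5Aux

open Set


set_option maxHeartbeats 1000000

/-- Term of the double series. -/
noncomputable def trm (t : ℝ) (r : ℕ) (p : ℕ × ℕ) : ℝ :=
  ((p.1 : ℝ) - (p.2 : ℝ)) ^ r * t ^ (p.1 + p.2) / ((p.1.factorial : ℝ) * (p.2.factorial : ℝ))

/-- The `r`-th discrete moment (up to `exp (2t)`). -/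
noncomputable def Dm (r : ℕ) (t : ℝ) : ℝ := ∑' p : ℕ × ℕ, trm t r p

lemma summable_single (r : ℕ) {x : ℝ} (hx : 0 ≤ x) :
    Summable (fun a : ℕ => ((a : ℝ) + 1) ^ r * x ^ a / (a.factorial : ℝ)) := by
  have h := (Real.summable_pow_div_factorial (Real.exp 1 * x)).mul_left
      ((r.factorial : ℝ) * Real.exp 1)
  refine Summable.of_nonneg_of_le (fun a => by positivity) (fun a => ?_) h
  have h1 : ((a : ℝ) + 1) ^ r ≤ (r.factorial : ℝ) * Real.exp ((a : ℝ) + 1) := by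
    have := Real.pow_div_factorial_le_exp (x := (a : ℝ) + 1) (by positivity) r
    rw [div_le_iff₀ (by positivity)] at this
    linarith [this]
  have h2 : Real.exp ((a : ℝ) + 1) = Real.exp 1 * Real.exp 1 ^ a := by
    rw [← Real.exp_nat_mul, ← Real.exp_add]; ring_nf
  calc ((a : ℝ) + 1) ^ r * x ^ a / (a.factorial : ℝ)
      ≤ ((r.factorial : ℝ) * Real.exp ((a:ℝ)+1)) * x ^ a / (a.factorial : ℝ) := by
        gcongr
    _ = (r.factorial : ℝ) * Real.exp 1 * ((Real.exp 1 * x) ^ a / (a.factorial : ℝ)) := by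
        rw [h2, mul_pow]; ring

lemma summable_dom (r : ℕ) (t : ℝ) :
    Summable (fun p : ℕ × ℕ =>
      (((p.1 : ℝ) + 1) ^ r * |t| ^ p.1 / (p.1.factorial : ℝ)) *
        (((p.2 : ℝ) + 1) ^ r * |t| ^ p.2 / (p.2.factorial : ℝ))) := by
  have h := summable_single r (abs_nonneg t)
  have hn : Summable (fun a : ℕ => ‖((a : ℝ) + 1) ^ r * |t| ^ a / (a.factorial : ℝ)‖) := by
    refine h.congr (fun a => ?_)
    rw [Real.norm_of_nonneg]
    positivity
  exact summable_mul_of_summable_norm hn hn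

/-- Master summability lemma: anything bounded by `((a+1)(b+1))^r` times the factorial weight. -/
lemma summable_of_bound (t : ℝ) (r : ℕ) (F : ℕ × ℕ → ℝ)
    (h : ∀ p : ℕ × ℕ, |F p| ≤ ((p.1 : ℝ) + 1) ^ r * ((p.2 : ℝ) + 1) ^ r) :
    Summable (fun p : ℕ × ℕ =>
      F p * t ^ (p.1 + p.2) / ((p.1.factorial : ℝ) * (p.2.factorial : ℝ))) := by
  refine Summable.of_norm_bounded (summable_dom r t) (fun p => ?_)
  have hf1 : (0:ℝ) < (p.1.factorial : ℝ) := by exact_mod_cast p.1.factorial_pos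
  have hf2 : (0:ℝ) < (p.2.factorial : ℝ) := by exact_mod_cast p.2.factorial_pos
  rw [Real.norm_eq_abs, abs_div, abs_mul, abs_pow]
  rw [abs_of_pos (mul_pos hf1 hf2)]
  rw [div_le_iff₀ (mul_pos hf1 hf2)]
  have heq : (((p.1 : ℝ) + 1) ^ r * |t| ^ p.1 / (p.1.factorial : ℝ)) *
        (((p.2 : ℝ) + 1) ^ r * |t| ^ p.2 / (p.2.factorial : ℝ)) *
          ((p.1.factorial : ℝ) * (p.2.factorial:ℝ))
      = (((p.1 : ℝ) + 1) ^ r * ((p.2 : ℝ) + 1) ^ r) * (|t| ^ p.1 * |t| ^ p.2) := by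
    field_simp
  rw [heq, ← pow_add]
  exact mul_le_mul_of_nonneg_right (h p) (by positivity)

lemma abs_sub_le_prod (p : ℕ × ℕ) : |((p.1:ℝ) - (p.2:ℝ))| ≤ ((p.1:ℝ)+1) * ((p.2:ℝ)+1) := by
  have h0 : (0:ℝ) ≤ (p.1:ℝ) := Nat.cast_nonneg _
  have h0' : (0:ℝ) ≤ (p.2:ℝ) := Nat.cast_nonneg _
  rw [abs_sub_le_iff]
  constructor <;> nlinarith

lemma summable_trm (r : ℕ) (t : ℝ) : Summable (trm t r) := by
  have h := summable_of_bound t r (fun p => ((p.1:ℝ) - (p.2:ℝ)) ^ r) (fun p => by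
    rw [abs_pow, ← mul_pow]
    exact pow_le_pow_left₀ (abs_nonneg _) (abs_sub_le_prod p) r)
  exact h.congr (fun p => rfl)

lemma summable_fst_trm (r : ℕ) (t : ℝ) :
    Summable (fun p : ℕ × ℕ => (p.1 : ℝ) * trm t r p) := by
  have h := summable_of_bound t (r+1)
      (fun p => (p.1 : ℝ) * ((p.1:ℝ) - (p.2:ℝ)) ^ r) (fun p => ?_)
  · exact h.congr (fun p => by simp only [trm]; ring)
  have h0 : (0:ℝ) ≤ (p.1:ℝ) := Nat.cast_nonneg _
  have h0' : (0:ℝ) ≤ (p.2:ℝ) := Nat.cast_nonneg _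
  rw [abs_mul, abs_pow, pow_succ ((p.1:ℝ)+1), pow_succ ((p.2:ℝ)+1)]
  have h1 : |(p.1 : ℝ)| ≤ ((p.1:ℝ)+1) * ((p.2:ℝ)+1) := by
    rw [abs_of_nonneg h0]; nlinarith
  have h2 : |((p.1:ℝ) - (p.2:ℝ))| ^ r ≤ (((p.1:ℝ)+1) * ((p.2:ℝ)+1)) ^ r :=
    pow_le_pow_left₀ (abs_nonneg _) (abs_sub_le_prod p) r
  calc |(p.1:ℝ)| * |((p.1:ℝ)-(p.2:ℝ))| ^ r
      ≤ (((p.1:ℝ)+1) * ((p.2:ℝ)+1)) * (((p.1:ℝ)+1) * ((p.2:ℝ)+1)) ^ r :=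
        mul_le_mul h1 h2 (by positivity) (by positivity)
    _ = ((p.1:ℝ)+1)^r * ((p.1:ℝ)+1) * (((p.2:ℝ)+1)^r * ((p.2:ℝ)+1)) := by rw [mul_pow]; ring

lemma summable_snd_trm (r : ℕ) (t : ℝ) :
    Summable (fun p : ℕ × ℕ => (p.2 : ℝ) * trm t r p) := by
  have h := summable_of_bound t (r+1)
      (fun p => (p.2 : ℝ) * ((p.1:ℝ) - (p.2:ℝ)) ^ r) (fun p => ?_)
  · exact h.congr (fun p => by simp only [trm]; ring)
  have h0 : (0:ℝ) ≤ (p.1:ℝ) := Nat.cast_nonneg _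
  have h0' : (0:ℝ) ≤ (p.2:ℝ) := Nat.cast_nonneg _
  rw [abs_mul, abs_pow, pow_succ ((p.1:ℝ)+1), pow_succ ((p.2:ℝ)+1)]
  have h1 : |(p.2 : ℝ)| ≤ ((p.1:ℝ)+1) * ((p.2:ℝ)+1) := by
    rw [abs_of_nonneg h0']; nlinarith
  have h2 : |((p.1:ℝ) - (p.2:ℝ))| ^ r ≤ (((p.1:ℝ)+1) * ((p.2:ℝ)+1)) ^ r :=
    pow_le_pow_left₀ (abs_nonneg _) (abs_sub_le_prod p) r
  calc |(p.2:ℝ)| * |((p.1:ℝ)-(p.2:ℝ))| ^ r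
      ≤ (((p.1:ℝ)+1) * ((p.2:ℝ)+1)) * (((p.1:ℝ)+1) * ((p.2:ℝ)+1)) ^ r :=
        mul_le_mul h1 h2 (by positivity) (by positivity)
    _ = ((p.1:ℝ)+1)^r * ((p.1:ℝ)+1) * (((p.2:ℝ)+1)^r * ((p.2:ℝ)+1)) := by rw [mul_pow]; ring



lemma D_zero (t : ℝ) : Dm 0 t = Real.exp (2 * t) := by
  have hn : Summable (fun a : ℕ => ‖t ^ a / (a.factorial : ℝ)‖) := by
    refine (Real.summable_pow_div_factorial |t|).congr (fun a => ?_)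
    simp [Real.norm_eq_abs, abs_div, abs_pow, Nat.abs_cast]
  have h := tsum_mul_tsum_of_summable_norm (f := fun a : ℕ => t ^ a / (a.factorial : ℝ))
      (g := fun a : ℕ => t ^ a / (a.factorial : ℝ)) hn hn
  have hexp : Real.exp t = ∑' n : ℕ, t ^ n / (n.factorial : ℝ) := by
    rw [Real.exp_eq_exp_ℝ, NormedSpace.exp_eq_tsum_div]
  rw [two_mul, Real.exp_add, hexp, h, Dm]
  refine tsum_congr (fun p => ?_)
  rw [trm, pow_zero, pow_add]
  ring

lemma D_odd {r : ℕ} (hr : Odd r) (t : ℝ) : Dm r t = 0 := by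
  have h := (Equiv.prodComm ℕ ℕ).tsum_eq (trm t r)
  have h2 : ∀ p : ℕ × ℕ, trm t r ((Equiv.prodComm ℕ ℕ) p) = - trm t r p := by
    intro p
    simp only [trm, Equiv.prodComm_apply, Prod.fst_swap, Prod.snd_swap]
    rw [show ((p.2 : ℝ) - (p.1 : ℝ)) = -((p.1:ℝ) - (p.2:ℝ)) by ring, hr.neg_pow]
    rw [Nat.add_comm p.2 p.1]
    ring
  rw [tsum_congr h2, tsum_neg] at h
  rw [Dm]
  linarith [h]

lemma A_eq (r : ℕ) (t : ℝ) :
    ∑' p : ℕ × ℕ, (p.1 : ℝ) * trm t r p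
      = t * ∑ i ∈ Finset.range (r + 1), (r.choose i : ℝ) * Dm i t := by
  have hinj : Function.Injective (fun q : ℕ × ℕ => (q.1 + 1, q.2)) := by
    intro a b h
    simpa [Prod.ext_iff] using h
  have hsupp : Function.support (fun p : ℕ × ℕ => (p.1 : ℝ) * trm t r p)
      ⊆ Set.range (fun q : ℕ × ℕ => (q.1 + 1, q.2)) := by
    intro p hp
    rcases p with ⟨a, b⟩
    rcases Nat.eq_zero_or_pos a with h0 | h0
    · exfalso; apply hp; simp [h0]
    · exact ⟨(a - 1, b), by simp [Nat.sub_add_cancel h0]⟩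
  have step1 := Function.Injective.tsum_eq hinj hsupp
  have step2 : ∀ q : ℕ × ℕ,
      ((q.1 + 1 : ℕ) : ℝ) * trm t r (q.1 + 1, q.2)
        = ∑ i ∈ Finset.range (r + 1), (r.choose i : ℝ) * (t * trm t i q) := by
    intro ⟨a, b⟩
    simp only [trm]
    have hfac : (((a + 1).factorial : ℕ) : ℝ) = ((a:ℝ) + 1) * (a.factorial : ℝ) := by
      rw [Nat.factorial_succ]; push_cast; ring
    have hsub : ((a + 1 : ℕ) : ℝ) - (b : ℝ) = ((a : ℝ) - (b : ℝ)) + 1 := by push_cast; ring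
    have hpow : t ^ (a + 1 + b) = t ^ (a + b) * t := by
      rw [show a + 1 + b = (a + b) + 1 by omega, pow_succ]
    rw [hsub, add_pow, hfac, hpow, Finset.sum_mul, Finset.sum_div, Finset.mul_sum]
    refine Finset.sum_congr rfl (fun i _ => ?_)
    have ha1 : ((a:ℝ) + 1) ≠ 0 := by positivity
    have hfa : (a.factorial : ℝ) ≠ 0 := by exact_mod_cast a.factorial_ne_zero
    have hfb : (b.factorial : ℝ) ≠ 0 := by exact_mod_cast b.factorial_ne_zero
    have hcast : (((a + 1 : ℕ)) : ℝ) = (a : ℝ) + 1 := by push_cast; ring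
    rw [hcast, one_pow]
    field_simp
  calc ∑' p : ℕ × ℕ, (p.1 : ℝ) * trm t r p
      = ∑' q : ℕ × ℕ, ((q.1 + 1 : ℕ) : ℝ) * trm t r (q.1 + 1, q.2) := by
        rw [← step1]
    _ = ∑' q : ℕ × ℕ, ∑ i ∈ Finset.range (r + 1), (r.choose i : ℝ) * (t * trm t i q) :=
        tsum_congr step2
    _ = ∑ i ∈ Finset.range (r + 1), ∑' q : ℕ × ℕ, (r.choose i : ℝ) * (t * trm t i q) :=
        Summable.tsum_finsetSum (fun i _ => ((summable_trm i t).mul_left t).mul_left _)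
    _ = t * ∑ i ∈ Finset.range (r + 1), (r.choose i : ℝ) * Dm i t := by
        rw [Finset.mul_sum]
        refine Finset.sum_congr rfl (fun i _ => ?_)
        rw [tsum_mul_left, tsum_mul_left, Dm]
        ring

lemma B_eq (r : ℕ) (t : ℝ) :
    ∑' p : ℕ × ℕ, (p.2 : ℝ) * trm t r p
      = (-1) ^ r * ∑' p : ℕ × ℕ, (p.1 : ℝ) * trm t r p := by
  have h := (Equiv.prodComm ℕ ℕ).tsum_eq (fun p : ℕ × ℕ => (p.2 : ℝ) * trm t r p)
  have h2 : ∀ q : ℕ × ℕ,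
      (((Equiv.prodComm ℕ ℕ) q).2 : ℝ) * trm t r ((Equiv.prodComm ℕ ℕ) q)
        = (-1) ^ r * ((q.1 : ℝ) * trm t r q) := by
    intro q
    simp only [trm, Equiv.prodComm_apply, Prod.fst_swap, Prod.snd_swap]
    rw [show ((q.2 : ℝ) - (q.1 : ℝ)) = -((q.1:ℝ) - (q.2:ℝ)) by ring, neg_pow]
    rw [Nat.add_comm q.2 q.1]
    ring
  rw [← h, tsum_congr h2, tsum_mul_left]

lemma D_succ (r : ℕ) (t : ℝ) :
    Dm (r + 1) t = (1 - (-1) ^ r) *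
      (t * ∑ i ∈ Finset.range (r + 1), (r.choose i : ℝ) * Dm i t) := by
  have hpt : ∀ p : ℕ × ℕ, trm t (r + 1) p = (p.1 : ℝ) * trm t r p - (p.2 : ℝ) * trm t r p := by
    intro p
    simp only [trm, pow_succ]
    ring
  rw [Dm, tsum_congr hpt, Summable.tsum_sub (summable_fst_trm r t) (summable_snd_trm r t), B_eq, A_eq]
  ring



/-- Limit constants. -/
noncomputable def climit (r : ℕ) : ℝ :=
  if Even r then (r.factorial : ℝ) / ((r / 2).factorial : ℝ) else 0

lemma climit_two_mul (k : ℕ) :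
    climit (2 * k) = ((2 * k).factorial : ℝ) / (k.factorial : ℝ) := by
  rw [climit, if_pos (even_two_mul k), Nat.mul_div_cancel_left k (by norm_num)]

lemma climit_step (j : ℕ) :
    climit (2 * j + 2) = 2 * ((2 * j + 1 : ℕ) : ℝ) * (climit (2 * j) * 1) := by
  rw [show 2 * j + 2 = 2 * (j + 1) by ring, climit_two_mul, climit_two_mul]
  have h1 : (2 * (j + 1)).factorial = (2 * j + 2) * ((2 * j + 1) * (2 * j).factorial) := by
    rw [show 2 * (j + 1) = (2 * j + 1) + 1 by ring, Nat.factorial_succ, Nat.factorial_succ]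
  have h2 : (j + 1).factorial = (j + 1) * j.factorial := Nat.factorial_succ j
  rw [h1, h2]
  have hj : ((j.factorial : ℕ) : ℝ) ≠ 0 := by exact_mod_cast j.factorial_ne_zero
  have hj1 : ((j : ℝ) + 1) ≠ 0 := by positivity
  push_cast
  field_simp

lemma sum_limit_eq (j : ℕ) :
    ∑ i ∈ Finset.range (2 * j + 1 + 1),
        (2 * ((2 * j + 1).choose i : ℝ)) * (climit i * (0:ℝ) ^ (j - i / 2))
      = climit (2 * j + 2) := by
  rw [Finset.sum_eq_single_of_mem (2 * j) (by simp only [Finset.mem_range]; omega)]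
  · rw [show j - (2 * j) / 2 = 0 by omega, pow_zero,
      show 2 * j + 1 = (2 * j) + 1 by ring, Nat.choose_succ_self_right, climit_step]
  · intro i hi hne
    rcases Nat.even_or_odd i with ⟨l, hl⟩ | hoddi
    · have hil : i = 2 * l := by omega
      have : j - i / 2 ≠ 0 := by
        have := Finset.mem_range.mp hi
        omega
      rw [zero_pow this]
      ring
    · rw [climit, if_neg (Nat.not_even_iff_odd.mpr hoddi)]
      ring

lemma main_tendsto (r : ℕ) :
    Tendsto (fun t : ℝ => Real.exp (-2 * t) * Dm r t / t ^ (r / 2)) atTop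
      (nhds (climit r)) := by
  induction r using Nat.strong_induction_on with
  | _ r ih =>
    rcases Nat.even_or_odd r with hev | hodd
    · rcases Nat.eq_zero_or_pos r with h0 | hpos
      · subst h0
        have hf : ∀ t : ℝ, Real.exp (-2 * t) * Dm 0 t / t ^ (0 / 2) = 1 := by
          intro t
          rw [D_zero, ← Real.exp_add]
          norm_num
        rw [show climit 0 = 1 by simp [climit]]
        exact Tendsto.congr (fun t => (hf t).symm) tendsto_const_nhds
      · obtain ⟨j, hj⟩ : ∃ j, r = 2 * j + 2 := by
          rcases hev with ⟨m, hm⟩; exact ⟨m - 1, by omega⟩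
        subst hj
        set m := 2 * j + 1 with hm
        have hodd' : Odd m := ⟨j, by omega⟩
        have hrec : ∀ t : ℝ, Dm (2 * j + 2) t
            = 2 * (t * ∑ i ∈ Finset.range (m + 1), (m.choose i : ℝ) * Dm i t) := by
          intro t
          rw [show 2 * j + 2 = m + 1 by omega, D_succ, hodd'.neg_one_pow]
          norm_num
        have hEq : ∀ᶠ t : ℝ in atTop,
            (∑ i ∈ Finset.range (m + 1),
              (2 * (m.choose i : ℝ)) *
                ((Real.exp (-2 * t) * Dm i t / t ^ (i / 2)) * (1 / t) ^ (j - i / 2)))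
            = Real.exp (-2 * t) * Dm (2 * j + 2) t / t ^ ((2 * j + 2) / 2) := by
          filter_upwards [eventually_gt_atTop (0 : ℝ)] with t ht
          have ht' : t ≠ 0 := ne_of_gt ht
          rw [hrec t, show (2 * j + 2) / 2 = j + 1 by omega,
            Finset.mul_sum, Finset.mul_sum, Finset.mul_sum, Finset.sum_div]
          refine Finset.sum_congr rfl (fun i hi => ?_)
          have hile : i / 2 ≤ j := by
            have := Finset.mem_range.mp hi; omega
          have hsplit : t ^ (j + 1) = t ^ (i / 2) * t ^ (j - i / 2) * t := by
            rw [← pow_add, ← pow_succ]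
            congr 1
            omega
          rw [hsplit, one_div, inv_pow]
          field_simp
        have hterm : ∀ i ∈ Finset.range (m + 1),
            Tendsto (fun t : ℝ =>
              (2 * (m.choose i : ℝ)) *
                ((Real.exp (-2 * t) * Dm i t / t ^ (i / 2)) * (1 / t) ^ (j - i / 2)))
              atTop (nhds ((2 * (m.choose i : ℝ)) * (climit i * (0:ℝ) ^ (j - i / 2)))) := by
          intro i hi
          have hi' : i < 2 * j + 2 := by have := Finset.mem_range.mp hi; omega
          have h1 := ih i hi'
          have h2 : Tendsto (fun t : ℝ => (1 / t) ^ (j - i / 2)) atTop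
              (nhds ((0:ℝ) ^ (j - i / 2))) :=
            (tendsto_inv_atTop_zero.congr (fun t => (one_div t).symm)).pow _
          exact (h1.mul h2).const_mul _
        have hsum := tendsto_finset_sum (Finset.range (m + 1)) hterm
        rw [sum_limit_eq j] at hsum
        exact hsum.congr' hEq
    · have hz : ∀ t : ℝ, Real.exp (-2 * t) * Dm r t / t ^ (r / 2) = 0 := by
        intro t; rw [D_odd hodd]; simp
      rw [show climit r = 0 by rw [climit, if_neg (Nat.not_even_iff_odd.mpr hodd)]]
      exact Tendsto.congr (fun t => (hz t).symm) tendsto_const_nhds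



/-- Reindexing `ℤ × ℕ ≃ ℕ × ℕ`. -/
def reidx : ℤ × ℕ ≃ ℕ × ℕ where
  toFun p := (p.2 + p.1.toNat, p.2 + (-p.1).toNat)
  invFun q := ((q.1 : ℤ) - (q.2 : ℤ), min q.1 q.2)
  left_inv p := by
    rcases p with ⟨n, m⟩
    refine Prod.ext ?_ ?_ <;> simp only <;> omega
  right_inv q := by
    rcases q with ⟨a, b⟩
    refine Prod.ext ?_ ?_ <;> simp only <;> omega

noncomputable def G (k : ℕ) (t : ℝ) (p : ℤ × ℕ) : ℝ :=
  ((p.1 : ℝ)) ^ (2 * k) *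
    (t ^ (2 * p.2 + p.1.natAbs) / ((p.2.factorial : ℝ) * (((p.2 + p.1.natAbs)).factorial : ℝ)))

lemma trm_comp (k : ℕ) (t : ℝ) (p : ℤ × ℕ) : trm t (2 * k) (reidx p) = G k t p := by
  rcases p with ⟨n, m⟩
  simp only [trm, G, reidx, Equiv.coe_fn_mk]
  have hab : ((m + n.toNat : ℕ) : ℝ) - ((m + (-n).toNat : ℕ) : ℝ) = (n : ℝ) := by
    have h : ((m + n.toNat : ℕ) : ℤ) - ((m + (-n).toNat : ℕ) : ℤ) = n := by omega
    have := congrArg (fun z : ℤ => (z : ℝ)) h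
    push_cast at this ⊢
    linarith [this]
  have hsum : (m + n.toNat) + (m + (-n).toNat) = 2 * m + n.natAbs := by omega
  have hfac : ((m + n.toNat).factorial : ℝ) * ((m + (-n).toNat).factorial : ℝ)
      = (m.factorial : ℝ) * ((m + n.natAbs).factorial : ℝ) := by
    rcases le_or_gt 0 n with h | h
    · have e1 : m + n.toNat = m + n.natAbs := by omega
      have e2 : m + (-n).toNat = m := by omega
      rw [e1, e2, mul_comm]
    · have e1 : m + n.toNat = m := by omega
      have e2 : m + (-n).toNat = m + n.natAbs := by omega
      rw [e1, e2]
  rw [hab, hsum, hfac, mul_div_assoc]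

lemma summable_G (k : ℕ) (t : ℝ) : Summable (G k t) := by
  have h : Summable (trm t (2 * k) ∘ reidx) := (reidx.summable_iff).mpr (summable_trm (2 * k) t)
  exact h.congr (fun p => trm_comp k t p)

lemma numer (k : ℕ) (t : ℝ) :
    ∑' n : ℤ, (n : ℝ) ^ (2 * k) * heatKernel t n = Real.exp (-2 * t) * Dm (2 * k) t := by
  have hheat : ∀ n : ℤ, (n : ℝ) ^ (2 * k) * heatKernel t n
      = Real.exp (-2 * t) * ∑' m : ℕ, G k t (n, m) := by
    intro n
    rw [heatKernel]
    have hG : ∀ m : ℕ, t ^ (2 * m + n.natAbs) /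
        ((m.factorial : ℝ) * Real.Gamma ((m : ℝ) + (n.natAbs : ℝ) + 1))
        = t ^ (2 * m + n.natAbs) / ((m.factorial : ℝ) * (((m + n.natAbs)).factorial : ℝ)) := by
      intro m
      congr 2
      have : ((m : ℝ) + (n.natAbs : ℝ)) = ((m + n.natAbs : ℕ) : ℝ) := by push_cast; ring
      rw [this, Real.Gamma_nat_eq_factorial]
    rw [tsum_congr hG]
    have : ∑' m : ℕ, G k t (n, m)
        = (n : ℝ) ^ (2 * k) * ∑' m : ℕ, t ^ (2 * m + n.natAbs) /
            ((m.factorial : ℝ) * (((m + n.natAbs)).factorial : ℝ)) := by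
      rw [← tsum_mul_left]
      exact tsum_congr (fun m => rfl)
    rw [this]
    ring
  rw [tsum_congr hheat, tsum_mul_left]
  congr 1
  have hs := summable_G k t
  rw [Dm, ← reidx.tsum_eq (trm t (2 * k)), tsum_congr (trm_comp k t),
    Summable.tsum_prod' hs (fun n => hs.prod_factor n)]



lemma Gamma_nat_add_half (k : ℕ) :
    Real.Gamma ((k : ℝ) + 1 / 2)
      = Real.sqrt π * ((2 * k).factorial : ℝ) / (4 ^ k * (k.factorial : ℝ)) := by
  induction k with
  | zero =>
    rw [show ((0:ℕ):ℝ) + 1/2 = 1/2 by norm_num, Real.Gamma_one_half_eq]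
    norm_num
  | succ k ih =>
    have hne : ((k : ℝ) + 1 / 2) ≠ 0 := by positivity
    have hstep : Real.Gamma (((k + 1 : ℕ) : ℝ) + 1 / 2)
        = ((k : ℝ) + 1 / 2) * Real.Gamma ((k : ℝ) + 1 / 2) := by
      rw [show (((k + 1 : ℕ) : ℝ) + 1 / 2) = ((k : ℝ) + 1 / 2) + 1 by push_cast; ring]
      exact Real.Gamma_add_one hne
    rw [hstep, ih]
    have h1 : (2 * (k + 1)).factorial = (2 * k + 2) * ((2 * k + 1) * (2 * k).factorial) := by
      rw [show 2 * (k + 1) = (2 * k + 1) + 1 by ring, Nat.factorial_succ, Nat.factorial_succ]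
    have h2 : (k + 1).factorial = (k + 1) * k.factorial := Nat.factorial_succ k
    rw [h1, h2]
    have hkf : ((k.factorial : ℕ) : ℝ) ≠ 0 := by exact_mod_cast k.factorial_ne_zero
    have h4 : ((4 : ℝ) ^ k) ≠ 0 := by positivity
    have hk1 : ((k : ℝ) + 1) ≠ 0 := by positivity
    push_cast
    field_simp
    ring

lemma integrable_pow_mul_exp (k : ℕ) {b : ℝ} (hb : 0 < b) :
    Integrable fun x : ℝ => x ^ (2 * k) * Real.exp (-b * x ^ 2) := by
  have h := integrable_rpow_mul_exp_neg_mul_sq hb (s := ((2 * k : ℕ) : ℝ))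
    (lt_of_lt_of_le (by norm_num) (Nat.cast_nonneg _))
  exact h.congr (Filter.Eventually.of_forall fun x => by
    simp only [Real.rpow_natCast])

lemma integral_pow_mul_exp (k : ℕ) {b : ℝ} (hb : 0 < b) :
    ∫ x : ℝ, x ^ (2 * k) * Real.exp (-b * x ^ 2)
      = b ^ (-(((2 * k : ℕ) : ℝ) + 1) / 2) * Real.Gamma ((((2 * k : ℕ) : ℝ) + 1) / 2) := by
  have hint := integrable_pow_mul_exp k hb
  set f : ℝ → ℝ := fun x => x ^ (2 * k) * Real.exp (-b * x ^ 2) with hf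
  have heven : ∀ x : ℝ, f (-x) = f x := by
    intro x
    simp only [hf]
    rw [(even_two_mul k).neg_pow, neg_sq]
  have hsplit : (∫ x in Iic (0:ℝ), f x) + (∫ x in Ioi (0:ℝ), f x) = ∫ x : ℝ, f x :=
    intervalIntegral.integral_Iic_add_Ioi hint.integrableOn hint.integrableOn
  have hneg : (∫ x in Iic (0:ℝ), f x) = ∫ x in Ioi (0:ℝ), f x := by
    have h := integral_comp_neg_Ioi 0 f
    rw [neg_zero] at h
    rw [← h]
    exact (setIntegral_congr_fun measurableSet_Ioi (fun x _ => heven x))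
  have hIoi : ∫ x in Ioi (0:ℝ), f x
      = b ^ (-(((2 * k : ℕ) : ℝ) + 1) / 2) * (1 / 2)
          * Real.Gamma ((((2 * k : ℕ) : ℝ) + 1) / 2) := by
    have h := integral_rpow_mul_exp_neg_mul_rpow (p := 2) (q := ((2 * k : ℕ) : ℝ))
      two_pos (lt_of_lt_of_le (by norm_num) (Nat.cast_nonneg _)) hb
    rw [← h]
    refine setIntegral_congr_fun measurableSet_Ioi (fun x _ => ?_)
    simp only [hf]
    rw [Real.rpow_natCast, Real.rpow_two]
  rw [← hsplit, hneg, hIoi]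
  ring

lemma integ (k : ℕ) {t : ℝ} (ht : 0 < t) :
    ∫ s : ℝ, s ^ (2 * k) * gaussKernel t s
      = ((2 * k).factorial : ℝ) / (k.factorial : ℝ) * t ^ k := by
  have h4t : (0:ℝ) < 4 * t := by linarith
  set b : ℝ := 1 / (4 * t) with hbdef
  have hb : 0 < b := by positivity
  have hgk : ∀ s : ℝ, s ^ (2 * k) * gaussKernel t s
      = (1 / Real.sqrt (4 * π * t)) * (s ^ (2 * k) * Real.exp (-b * s ^ 2)) := by
    intro s
    rw [gaussKernel]
    have hx : -s ^ 2 / (4 * t) = -b * s ^ 2 := by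
      rw [hbdef]; field_simp
    rw [hx]; ring
  rw [show (fun s : ℝ => s ^ (2*k) * gaussKernel t s) = fun s : ℝ =>
      (1 / Real.sqrt (4 * π * t)) * (s ^ (2 * k) * Real.exp (-b * s ^ 2)) from funext hgk]
  rw [integral_const_mul, integral_pow_mul_exp k hb]
  have hbpow : b ^ (-(((2 * k : ℕ) : ℝ) + 1) / 2) = (4 * t) ^ k * Real.sqrt (4 * t) := by
    have h1 : b ^ (-(((2 * k : ℕ) : ℝ) + 1) / 2) = (4 * t) ^ ((k : ℝ) + 1 / 2) := by
      rw [hbdef, one_div, Real.inv_rpow h4t.le, ← Real.rpow_neg h4t.le]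
      congr 1
      push_cast; ring
    rw [h1, Real.rpow_add h4t, Real.rpow_natCast, ← Real.sqrt_eq_rpow]
  have hGamma : Real.Gamma ((((2 * k : ℕ) : ℝ) + 1) / 2)
      = Real.sqrt π * ((2 * k).factorial : ℝ) / (4 ^ k * (k.factorial : ℝ)) := by
    rw [show (((2 * k : ℕ) : ℝ) + 1) / 2 = (k : ℝ) + 1 / 2 by push_cast; ring]
    exact Gamma_nat_add_half k
  rw [hbpow, hGamma]
  have hsq : Real.sqrt (4 * π * t) = Real.sqrt (4 * t) * Real.sqrt π := by
    rw [show 4 * π * t = (4 * t) * π by ring, Real.sqrt_mul h4t.le]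
  rw [hsq]
  have h1 : Real.sqrt (4 * t) ≠ 0 := ne_of_gt (Real.sqrt_pos.mpr h4t)
  have h2 : Real.sqrt π ≠ 0 := ne_of_gt (Real.sqrt_pos.mpr pi_pos)
  have h3 : ((4:ℝ) ^ k) ≠ 0 := by positivity
  have h4 : ((k.factorial : ℕ) : ℝ) ≠ 0 := by exact_mod_cast k.factorial_ne_zero
  have h5 : (4 * t) ^ k = 4 ^ k * t ^ k := mul_pow 4 t k
  rw [h5]
  field_simp


end Stmt5Aux

/-- The ratio of the `2k`-th discrete and continuous Gaussian moments tends to 1. -/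
theorem stmt5 (k : ℕ) :
    Tendsto (fun t : ℝ =>
        (∑' n : ℤ, (n : ℝ) ^ (2 * k) * heatKernel t n) /
          (∫ s : ℝ, s ^ (2 * k) * gaussKernel t s))
      atTop (nhds 1) := by
  classical
  set C : ℝ := ((2 * k).factorial : ℝ) / (k.factorial : ℝ) with hC
  have hCpos : 0 < C := by
    apply div_pos
    · exact_mod_cast (2 * k).factorial_pos
    · exact_mod_cast k.factorial_pos
  have hmain := Stmt5Aux.main_tendsto (2 * k)
  rw [show (2 * k) / 2 = k by omega, Stmt5Aux.climit_two_mul, ← hC] at hmain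
  have hdiv : Tendsto (fun t : ℝ =>
      (Real.exp (-2 * t) * Stmt5Aux.Dm (2 * k) t / t ^ k) / C) atTop (nhds (C / C)) :=
    hmain.div_const C
  rw [div_self (ne_of_gt hCpos)] at hdiv
  refine hdiv.congr' ?_
  filter_upwards [eventually_gt_atTop (0 : ℝ)] with t ht
  rw [Stmt5Aux.numer k t, Stmt5Aux.integ k ht, ← hC]
  rw [div_div, mul_comm ((t:ℝ) ^ k) C]
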